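/- Let T be a computable tree (a partial order on ℕ whose order relation is decidable by a computable function, and in which the set of strict predecessors of every element is finite and linearly ordered) having at least one node with infinitely many children. Then T has a punctual presentation: there exists a partial order on ℕ whose order relation has primitive recursive characteristic function and which is isomorphic to T as a partial order. -/

import Mathlib

set_option linter.unusedVariables false

namespace PRCat

/-! ### Primitive recursion relative to an oracle -/

/-- The smallest class of total functions `ℕ^k → ℕ` (all arities `k`) containing the oracle
`g`, the constant zero function, the successor function and all coordinate projections, and
closed under composition and primitive recursion. -/
inductive OraclePR (g : ℕ → ℕ) : ∀ {n : ℕ}, (List.Vector ℕ n → ℕ) → Prop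
  | oracle : OraclePR g fun v : List.Vector ℕ 1 => g v.head
  | zero : OraclePR g fun _ : List.Vector ℕ 0 => 0
  | succ : OraclePR g fun v : List.Vector ℕ 1 => v.head.succ
  | get {n : ℕ} (i : Fin n) : OraclePR g fun v => v.get i
  | comp {m n : ℕ} {f : List.Vector ℕ n → ℕ} (gs : Fin n → List.Vector ℕ m → ℕ) :
      OraclePR g f → (∀ i, OraclePR g (gs i)) →
      OraclePR g fun v => f (List.Vector.ofFn fun i => gs i v)
  | prec {n : ℕ} {f : List.Vector ℕ n → ℕ} {h : List.Vector ℕ (n + 2) → ℕ} :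
      OraclePR g f → OraclePR g h →
      OraclePR g fun v : List.Vector ℕ (n + 1) =>
        v.head.rec (f v.tail) fun y IH => h (y ::ᵥ IH ::ᵥ v.tail)

/-- `f ≤_PR g` : the (unary) total function `f` is primitive recursive relative to `g`. -/
def PRle (f g : ℕ → ℕ) : Prop := OraclePR g fun v : List.Vector ℕ 1 => f v.head

/-- A total function is Δ⁰₂ if it is the pointwise limit of a total computable function. -/
def IsDelta2 (f : ℕ → ℕ) : Prop :=
  ∃ g : ℕ → ℕ → ℕ, Computable₂ g ∧ ∀ x, ∀ᶠ s in Filter.atTop, g x s = f x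

/-- A total function is Δ⁰₃ if it is a double pointwise limit of a total computable function,
all inner limits existing. -/
def IsDelta3 (f : ℕ → ℕ) : Prop :=
  ∃ g : ℕ → ℕ → ℕ → ℕ, Computable (fun p : ℕ × ℕ × ℕ => g p.1 p.2.1 p.2.2) ∧
    ∃ G : ℕ → ℕ → ℕ, (∀ x s, ∀ᶠ t in Filter.atTop, g x s t = G x s) ∧
      ∀ x, ∀ᶠ s in Filter.atTop, G x s = f x

/-- `IsDeltaN n f` for `n ∈ {1,2,3}` : `f` is a total Δ⁰ₙ function. -/
def IsDeltaN : ℕ → (ℕ → ℕ) → Prop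
  | 1, f => Computable f
  | 2, f => IsDelta2 f
  | 3, f => IsDelta3 f
  | _, _ => False

/-- `h ⊕ h'` : the join sending `2n` to `h n` and `2n + 1` to `h' n`. -/
def join (h h' : ℕ → ℕ) : ℕ → ℕ := fun n => if n % 2 = 0 then h (n / 2) else h' (n / 2)

/-! ### Trees as partial orders -/

/-- A tree on `ℕ` : a partial order in which the set of strict predecessors of every element
is finite and linearly ordered, given by the characteristic function of the order relation. -/
structure TOrd where
  le : ℕ → ℕ → Bool
  refl : ∀ a, le a a = true
  antisymm : ∀ a b, le a b = true → le b a = true → a = b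
  trans : ∀ a b c, le a b = true → le b c = true → le a c = true
  pred_finite : ∀ a, {b | le b a = true ∧ b ≠ a}.Finite
  pred_linear : ∀ a b c, le b a = true → le c a = true → le b c = true ∨ le c b = true

/-- A tree on `ℕ` is punctual if its order relation is primitive recursive. -/
def TOrd.Punctual (T : TOrd) : Prop := Primrec₂ T.le

/-- A tree on `ℕ` is computable if its order relation is computable. -/
def TOrd.Comp (T : TOrd) : Prop := Computable₂ T.le

/-- `h` is an isomorphism from `A` onto `B`. -/
def TOrd.Iso (A B : TOrd) (h : ℕ → ℕ) : Prop :=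
  Function.Bijective h ∧ ∀ a b, A.le a b = B.le (h a) (h b)

/-- The tree `T` is isomorphic, as a partial order, to the partially ordered type `P`. -/
def TOrd.IsoTo (T : TOrd) (P : Type) [LE P] : Prop :=
  ∃ f : ℕ → P, Function.Bijective f ∧ ∀ a b, (T.le a b = true ↔ f a ≤ f b)

/-- `c` is a child of `t` : `c` covers `t`. -/
def TOrd.Child (T : TOrd) (t c : ℕ) : Prop :=
  T.le t c = true ∧ t ≠ c ∧ ∀ z, T.le t z = true → T.le z c = true → z = t ∨ z = c

/-- `T` has finite height: a uniform finite bound on the cardinalities of its chains. -/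
def TOrd.FiniteHeight (T : TOrd) : Prop :=
  ∃ n : ℕ, ∀ s : Finset ℕ, (∀ a ∈ s, ∀ b ∈ s, T.le a b = true ∨ T.le b a = true) → s.card ≤ n

/-- `d ∈ prcat(T)` : for every punctual presentation `B` of `T` there is an isomorphism
`h : T → B` with `h ≤_PR d` and `h⁻¹ ≤_PR d`. -/
def TOrd.PrcatAt (T : TOrd) (d : ℕ → ℕ) : Prop :=
  ∀ B : TOrd, B.Punctual → (∃ h, T.Iso B h) →
    ∃ h h' : ℕ → ℕ, Function.LeftInverse h' h ∧ Function.RightInverse h' h ∧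
      T.Iso B h ∧ PRle h d ∧ PRle h' d

/-- `T` is computably categorical: between any two computable presentations of `T` there is a
computable isomorphism. -/
def TOrd.CompCategorical (T : TOrd) : Prop :=
  ∀ A B : TOrd, A.Comp → B.Comp → (∃ h, T.Iso A h) → (∃ h, T.Iso B h) →
    ∃ h : ℕ → ℕ, Computable h ∧ A.Iso B h

/-- `T` is punctually categorical: between any two punctual presentations of `T` there is an
isomorphism `h` with both `h` and `h⁻¹` primitive recursive. -/
def TOrd.PunctCategorical (T : TOrd) : Prop :=
  ∀ A B : TOrd, A.Punctual → B.Punctual → (∃ h, T.Iso A h) → (∃ h, T.Iso B h) →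
    ∃ h h' : ℕ → ℕ, Function.LeftInverse h' h ∧ Function.RightInverse h' h ∧
      A.Iso B h ∧ Primrec h ∧ Primrec h'

/-- The countably infinite star: a least element `none` all of whose children are the
elements `some n`, with no other strict relations. -/
def Star : Type := Option ℕ

instance : PartialOrder Star where
  le x y := x = none ∨ x = y
  le_refl _ := Or.inr rfl
  le_trans x y z h₁ h₂ := by
    rcases h₁ with h₁ | h₁
    · exact Or.inl h₁
    · rw [h₁]; exact h₂
  le_antisymm x y h₁ h₂ := by
    rcases h₁ with h₁ | h₁
    · rcases h₂ with h₂ | h₂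
      · rw [h₁, h₂]
      · rw [h₂, h₁]
    · exact h₁



/-! Fix a node `t` with infinitely many children and approximate the order of `T` by stages.
The punctual copy is built on `ℕ` stage by stage: at stage `s` each of the positions `0, …, s`
is either mapped to an element of `T` or *pending*, and a pending position is treated as a new
leaf directly above `t`. The order between positions `i` and `j` is read off at stage `max i j`
and never revised, which makes it primitive recursive. Each stage tries to map the least
unmapped element `n` of `T`: once its comparisons with the elements already used have been
computed, `n` goes to the first pending position if it relates to all of them exactly as such a
leaf does, and to a new position otherwise; while waiting, a pending position is added. This
keeps every earlier decision true. Every `n` is eventually mapped. For each of the infinitely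
many children of `t`, the first element of its cone to be mapped has the type of a new leaf
above `t`, so pending positions are filled infinitely often, in order, and none stays pending
forever. Hence the limit map is an isomorphism. -/

def TOrd.comap (T : TOrd) (f : ℕ → ℕ) (hf : Function.Injective f) : TOrd where
  le a b := T.le (f a) (f b)
  refl a := T.refl (f a)
  antisymm a b hab hba := hf (T.antisymm _ _ hab hba)
  trans a b c := T.trans (f a) (f b) (f c)
  pred_finite a := ((T.pred_finite (f a)).preimage hf.injOn).subset
    fun _ ⟨hle, hne⟩ => ⟨hle, hf.ne hne⟩
  pred_linear a b c := T.pred_linear (f a) (f b) (f c)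

theorem TOrd.iso_comap (T : TOrd) {f : ℕ → ℕ} (hf : Function.Bijective f) :
    T.Iso (T.comap f hf.1) (Function.surjInv hf.2) := by
  refine ⟨⟨Function.injective_surjInv hf.2, (Function.leftInverse_surjInv hf).surjective⟩,
    fun a b => ?_⟩
  simp only [TOrd.comap, Function.surjInv_eq]

/-- Extends a relation on `ℕ` to `Option ℕ`, where `none` stands for a new leaf directly
above `t`. -/
def pendingLE (r : ℕ → ℕ → Bool) (t : ℕ) : Option ℕ → Option ℕ → Bool
  | some a, some b => r a b
  | some a, none => r a t || decide (a = t)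
  | none, _ => false

/-- `n` relates to every element occurring in `L` as the new leaf `none` of `pendingLE r t`
does. -/
def FitsAsLeaf (r : ℕ → ℕ → Bool) (t : ℕ) (L : List (Option ℕ)) (n : ℕ) : Prop :=
  ∀ x ∈ L, ∀ a ∈ x, r a n = (r a t || decide (a = t)) ∧ r n a = false

instance (r : ℕ → ℕ → Bool) (t : ℕ) (L : List (Option ℕ)) (n : ℕ) :
    Decidable (FitsAsLeaf r t L n) :=
  inferInstanceAs (Decidable (∀ x ∈ L, ∀ a ∈ x, _))

theorem FitsAsLeaf.le_eq {r : ℕ → ℕ → Bool} {t n a : ℕ} {L : List (Option ℕ)}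
    (h : FitsAsLeaf r t L n) (ha : some a ∈ L) :
    r a n = (r a t || decide (a = t)) ∧ r n a = false :=
  h _ ha a rfl

theorem FitsAsLeaf.incomparable {T : TOrd} {t n n' : ℕ} {L L' : List (Option ℕ)}
    (h : FitsAsLeaf T.le t L n) (ht : some t ∈ L) (h' : FitsAsLeaf T.le t L' n')
    (hn : some n ∈ L') : T.le n n' = false ∧ T.le n' n = false := by
  have hnt := (h.le_eq ht).2
  have hne : n ≠ t := by
    rintro rfl
    simp [T.refl] at hnt
  simpa [hnt, hne] using h'.le_eq hn

theorem TOrd.Child.eq_of_le {T : TOrd} {t x y n : ℕ} (hx : T.Child t x) (hy : T.Child t y)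
    (hxn : T.le x n = true) (hyn : T.le y n = true) : x = y := by
  have key : ∀ {x y}, T.Child t x → T.Child t y → T.le x y = true → x = y :=
    fun hx hy hxy => (hy.2.2 _ hx.1 hxy).resolve_left fun h => hx.2.1 h.symm
  rcases T.pred_linear n x y hxn hyn with hxy | hyx
  · exact key hx hy hxy
  · exact (key hy hx hyx).symm

theorem TOrd.Child.fitsAsLeaf {T : TOrd} {t x n : ℕ} {L : List (Option ℕ)} (hx : T.Child t x)
    (hxn : T.le x n = true) (hL : ∀ a, some a ∈ L → T.le x a = false) :
    FitsAsLeaf T.le t L n := by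
  intro y hy a (hya : y = some a)
  subst hya
  have hxa := hL a hy
  refine ⟨Bool.eq_iff_iff.2 ⟨fun han => ?_, fun h => ?_⟩, ?_⟩
  · have hax : T.le a x = true := (T.pred_linear n a x han hxn).resolve_right (by simp [hxa])
    rcases T.pred_linear x a t hax hx.1 with hat | hta
    · simp [hat]
    · rcases hx.2.2 a hta hax with rfl | rfl
      · simp
      · simp [T.refl] at hxa
  · rcases Bool.or_eq_true_iff.1 h with hat | hat
    · exact T.trans _ _ _ (T.trans _ _ _ hat hx.1) hxn
    · rw [of_decide_eq_true hat]
      exact T.trans _ _ _ hx.1 hxn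
  · by_contra hna
    simp [T.trans _ _ _ hxn (Bool.not_eq_false _ ▸ hna)] at hxa

def firstFree (L : List (Option ℕ)) : ℕ :=
  (List.range (L.length + 1)).findIdx fun n => some n ∉ L

theorem firstFree_not_mem (L : List (Option ℕ)) : some (firstFree L) ∉ L := by
  have hex : ∃ n ∈ List.range (L.length + 1), some n ∉ L := by
    by_contra! h
    have hsub : (List.range (L.length + 1)).map some ⊆ L := by
      simpa [List.subset_def] using h
    have := ((List.nodup_range).map (Option.some_injective ℕ)).length_le_of_subset hsub
    simp at this
  simpa [firstFree] using List.findIdx_getElem (w := List.findIdx_lt_length_of_exists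
    (xs := List.range (L.length + 1)) (p := fun n => decide (some n ∉ L)) (by simpa using hex))

theorem mem_of_lt_firstFree {L : List (Option ℕ)} {m : ℕ} (h : m < firstFree L) :
    some m ∈ L := by
  simpa using List.not_of_lt_findIdx h
    (xs := List.range (L.length + 1)) (p := fun n => decide (some n ∉ L))

/-- A primitive recursive approximation of the order of `T` by stages: `approx s a b` is the
truth value of `a ≤ b` once its computation has finished within `s` steps, and `none` before. -/
structure TOrd.Approx (T : TOrd) where
  approx : ℕ → ℕ → ℕ → Option Bool
  primrec : Primrec fun p : ℕ × ℕ × ℕ => approx p.1 p.2.1 p.2.2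
  le_of_approx_eq_some : ∀ {s a b v}, approx s a b = some v → T.le a b = v
  isSome_mono : ∀ {s s' a b}, s ≤ s' → (approx s a b).isSome → (approx s' a b).isSome
  exists_isSome : ∀ a b, ∃ s, (approx s a b).isSome

open Nat.Partrec in
theorem TOrd.Comp.nonempty_approx {T : TOrd} (hT : T.Comp) : Nonempty T.Approx := by
  have hpart : Nat.Partrec fun n => (Encodable.encode (T.le n.unpair.1 n.unpair.2) : ℕ) :=
    Partrec.nat_iff.1 (Computable.encode.comp
      (hT.comp (Computable.fst.comp .unpair) (Computable.snd.comp .unpair))).partrec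
  obtain ⟨c, hc⟩ := Code.exists_code.1 hpart
  have heval : ∀ {s a b x}, x ∈ Code.evaln s c (Nat.pair a b) →
      x = Encodable.encode (T.le a b) :=
    fun hx => by simpa [hc] using Code.evaln_sound hx
  refine ⟨{ approx := fun s a b => (Code.evaln s c (Nat.pair a b)).bind Encodable.decode
            primrec := ?_, le_of_approx_eq_some := ?_, isSome_mono := ?_, exists_isSome := ?_ }⟩
  · exact Primrec.option_bind (Code.primrec_evaln.comp
      (((Primrec.fst.pair (Primrec.const c)).pair
        (Primrec₂.natPair.comp (Primrec.fst.comp .snd) (Primrec.snd.comp .snd)))))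
      (Primrec.decode.comp Primrec.snd).to₂
  · intro s a b v h
    obtain ⟨x, hx, hxv⟩ := Option.bind_eq_some_iff.1 h
    rw [heval hx, Encodable.encodek] at hxv
    exact Option.some_injective _ hxv
  · intro s s' a b hss h
    obtain ⟨x, hx, -⟩ := Option.bind_eq_some_iff.1 (Option.some_get h).symm
    have hx' := Code.evaln_mono hss hx
    rw [Option.mem_def] at hx'
    simp [hx', heval hx, Encodable.encodek]
  · intro a b
    obtain ⟨s, hs⟩ := Code.evaln_complete.1 (by simp [hc] : Encodable.encode (T.le a b) ∈
      Code.eval c (Nat.pair a b))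
    exact ⟨s, by simp [Option.mem_def.1 hs, Encodable.encodek]⟩

namespace TOrd.Approx

variable {T : TOrd} (Q : T.Approx) (t : ℕ)

def leAt (s a b : ℕ) : Bool := decide (Q.approx s a b = some true)

def Settled (s : ℕ) (L : List (Option ℕ)) (n : ℕ) : Prop :=
  ∀ x ∈ L, ∀ a ∈ x, (Q.approx s a n).isSome ∧ (Q.approx s n a).isSome

instance (s : ℕ) (L : List (Option ℕ)) (n : ℕ) : Decidable (Q.Settled s L n) :=
  inferInstanceAs (Decidable (∀ x ∈ L, ∀ a ∈ x, _))

/-- Where stage `s` puts the least unused element `n` of `T`, given the current list `L`: the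
first pending position if `n` fits as a new leaf above `t` (a new position if there is none),
a new position if it does not fit, and nowhere while its comparisons are still running. -/
def target (s : ℕ) (L : List (Option ℕ)) : Option ℕ :=
  if Q.Settled s L (firstFree L) then
    some (if FitsAsLeaf (Q.leAt s) t L (firstFree L) then L.idxOf none else L.length)
  else none

def step (s : ℕ) (L : List (Option ℕ)) : List (Option ℕ) :=
  match Q.target t s L with
  | some p => (L ++ [none]).set p (some (firstFree L))
  | none => L ++ [none]

/-- Position `i` of `stage s` is `some a` if `i` is mapped to the element `a` of `T`, and
`none` if it is pending. -/
def stage : ℕ → List (Option ℕ)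
  | 0 => [some t]
  | s + 1 => Q.step t s (stage s)

def entry (s i : ℕ) : Option ℕ := (Q.stage t s).getD i none

def le (i j : ℕ) : Bool :=
  decide (i = j) ||
    pendingLE (Q.leAt (max i j)) t (Q.entry t (max i j) i) (Q.entry t (max i j) j)

def next (s : ℕ) : ℕ := firstFree (Q.stage t s)

def place (s : ℕ) : Option ℕ := Q.target t s (Q.stage t s)

end TOrd.Approx

/-! ### Primitive recursiveness of the construction -/

section Primrec
open Primrec

theorem PrimrecRel.forall_mem_list_forall_mem_option {α β : Type*} [Primcodable α]
    [Primcodable β] {p : α → β → Prop} [∀ a, DecidablePred (p a)] (hp : PrimrecRel p) :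
    PrimrecRel fun (a : α) (L : List (Option β)) => ∀ x ∈ L, ∀ b ∈ x, p a b := by
  have hopt : PrimrecRel fun (x : Option β) (a : α) => ∀ b ∈ x, p a b :=
    ⟨inferInstance, (option_casesOn fst (const true)
      (hp.decide.comp (snd.comp fst) snd).to₂).of_eq fun ⟨x, a⟩ => by cases x <;> simp⟩
  exact (PrimrecRel.forall_mem_list hopt).comp snd fst

theorem primrec_pendingLE {α : Type*} [Primcodable α] {r : α → ℕ → ℕ → Bool}
    (hr : Primrec fun p : α × ℕ × ℕ => r p.1 p.2.1 p.2.2) (t : ℕ) {f g : α → Option ℕ}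
    (hf : Primrec f) (hg : Primrec g) : Primrec fun a => pendingLE (r a) t (f a) (g a) := by
  have hsome := option_casesOn (hg.comp fst)
    (Primrec.or.comp (hr.comp (fst.pair (snd.pair (const t))))
      (Primrec.eq.decide.comp snd (const t)))
    (hr.comp ((fst.comp fst).pair ((snd.comp fst).pair snd))).to₂
  refine (option_casesOn hf (const false) hsome.to₂).of_eq fun a => ?_
  rcases f a with _ | b <;> rcases hga : g a with _ | c <;> simp [pendingLE, hga]

theorem primrec_firstFree : Primrec firstFree := by
  have hmem : PrimrecRel fun (L : List (Option ℕ)) (n : ℕ) => some n ∈ L :=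
    ((PrimrecRel.exists_mem_list (@Primrec.eq (Option ℕ) _)).comp fst
      (option_some.comp snd)).of_eq fun p => by simp
  exact list_findIdx (list_range.comp (succ.comp list_length))
    ((Primrec.not.comp (hmem.decide.comp fst snd)).to₂.of_eq fun L n => by simp)

namespace TOrd.Approx

variable {T : TOrd} (Q : T.Approx) (t : ℕ)

theorem primrec_leAt : Primrec fun p : ℕ × ℕ × ℕ => Q.leAt p.1 p.2.1 p.2.2 :=
  Primrec.eq.decide.comp Q.primrec (const (some true))

theorem primrec_target : Primrec₂ (Q.target t) := by
  have happrox : ∀ {f g h : (ℕ × ℕ) × ℕ → ℕ}, Primrec f → Primrec g →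
      Primrec h → Primrec fun p => Q.approx (f p) (g p) (h p) := fun hf hg hh =>
    Q.primrec.comp (hf.pair (hg.pair hh))
  have hleAt : ∀ {f g h : (ℕ × ℕ) × ℕ → ℕ}, Primrec f → Primrec g → Primrec h →
      Primrec fun p => Q.leAt (f p) (g p) (h p) := fun hf hg hh =>
    Q.primrec_leAt.comp (hf.pair (hg.pair hh))
  have hs : Primrec fun p : (ℕ × ℕ) × ℕ => p.1.1 := fst.comp fst
  have hn : Primrec fun p : (ℕ × ℕ) × ℕ => p.1.2 := snd.comp fst
  have hsettled : PrimrecRel fun (q : ℕ × ℕ) a =>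
      (Q.approx q.1 a q.2).isSome ∧ (Q.approx q.1 q.2 a).isSome :=
    Primrec.primrecPred ((Primrec.and.comp (option_isSome.comp (happrox hs snd hn))
      (option_isSome.comp (happrox hs hn snd))).of_eq fun _ => by simp)
  have hfits : PrimrecRel fun (q : ℕ × ℕ) a =>
      Q.leAt q.1 a q.2 = (Q.leAt q.1 a t || decide (a = t)) ∧ Q.leAt q.1 q.2 a = false :=
    (Primrec.eq.comp (hleAt hs snd hn) (Primrec.or.comp (hleAt hs snd (const t))
      (Primrec.eq.decide.comp snd (const t)))).and
      (Primrec.eq.comp (hleAt hs hn snd) (const false))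
  have hpair : Primrec fun p : ℕ × List (Option ℕ) => (p.1, firstFree p.2) :=
    fst.pair (primrec_firstFree.comp snd)
  have hidx : Primrec fun p : ℕ × List (Option ℕ) => p.2.idxOf none :=
    (list_idxOf.comp (const none) snd).of_eq fun p => by congr; ext; simp
  exact ite ((PrimrecRel.forall_mem_list_forall_mem_option hsettled).comp hpair snd)
    (option_some.comp (ite ((PrimrecRel.forall_mem_list_forall_mem_option hfits).comp hpair snd)
      hidx (list_length.comp snd))) (const none)

theorem primrec_stage : Primrec (Q.stage t) := by
  have hstep : Primrec₂ (Q.step t) := by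
    refine (option_casesOn (Q.primrec_target t) (list_concat.comp snd (const none))
      (list_set.comp (list_concat.comp (snd.comp fst) (const none))
        (snd.pair (option_some.comp (primrec_firstFree.comp (snd.comp fst))))).to₂).to₂.of_eq
      fun s L => ?_
    simp only [TOrd.Approx.step]
    split <;> simp_all
  refine (nat_rec₁ [some t] hstep).of_eq fun s => ?_
  induction s with
  | zero => rfl
  | succ s ih => simp only [TOrd.Approx.stage, ← ih]

theorem primrec_le : Primrec₂ (Q.le t) := by
  have hmax : Primrec fun p : ℕ × ℕ => max p.1 p.2 := nat_max.comp fst snd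
  have hentry : ∀ {f : ℕ × ℕ → ℕ}, Primrec f →
      Primrec fun p => Q.entry t (max p.1 p.2) (f p) := fun hf =>
    (list_getD none).comp ((Q.primrec_stage t).comp hmax) hf
  exact Primrec.or.comp (Primrec.eq.decide.comp fst snd)
    (primrec_pendingLE (r := fun p : ℕ × ℕ => Q.leAt (max p.1 p.2)) ((Q.primrec_leAt).comp
      ((hmax.comp fst).pair snd)) t (hentry fst) (hentry snd))

end TOrd.Approx

end Primrec

/-! ### Invariants of the stages -/

namespace TOrd.Approx

variable {T : TOrd} (Q : T.Approx) (t : ℕ)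

theorem stage_succ (s : ℕ) : Q.stage t (s + 1) = match Q.place t s with
    | some p => (Q.stage t s ++ [none]).set p (some (Q.next t s))
    | none => Q.stage t s ++ [none] :=
  rfl

theorem length_stage (s : ℕ) : (Q.stage t s).length = s + 1 := by
  induction s with
  | zero => rfl
  | succ s ih =>
    rw [stage_succ]
    split <;> simp [ih]

theorem entry_succ (s i : ℕ) : Q.entry t (s + 1) i =
    if Q.place t s = some i then some (Q.next t s) else Q.entry t s i := by
  have happ : ∀ L : List (Option ℕ), (L ++ [none]).getD i none = L.getD i none := fun L => by
    by_cases h : i < L.length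
    · exact List.getD_append _ _ _ _ h
    · rw [List.getD_append_right _ _ _ _ (by omega), List.getD_eq_default L _ (by omega)]
      cases i - L.length <;> simp
  unfold entry
  rw [stage_succ]
  rcases hp : Q.place t s with _ | p
  · exact happ _
  · have hlen : p < (Q.stage t s ++ [none]).length := by
      unfold place target at hp
      split_ifs at hp <;> cases hp <;> simp [List.idxOf_le_length]
    simp only [List.getD_eq_getElem?_getD, List.getElem?_set, if_pos hlen, Option.some.injEq]
    split_ifs <;> simp_all [← List.getD_eq_getElem?_getD]

variable {Q t}

theorem stage_succ_of_place_eq_none {s : ℕ} (h : Q.place t s = none) :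
    Q.stage t (s + 1) = Q.stage t s ++ [none] := by
  rw [stage_succ, h]

theorem entry_eq_none_of_lt {s i : ℕ} (h : s < i) : Q.entry t s i = none := by
  unfold entry
  rw [List.getD_eq_default _ _ (by rw [length_stage]; omega)]

theorem le_of_entry_eq_some {s i a : ℕ} (h : Q.entry t s i = some a) : i ≤ s :=
  Nat.le_of_not_lt fun hlt => by simp [entry_eq_none_of_lt hlt] at h

theorem entry_place {s p : ℕ} (h : Q.place t s = some p) : Q.entry t s p = none := by
  unfold place target at h
  unfold entry
  split_ifs at h <;> cases h
  · by_cases hmem : none ∈ Q.stage t s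
    · rw [List.getD_eq_getElem?_getD, List.getElem?_idxOf hmem, Option.getD_some]
    · rw [List.idxOf_eq_length hmem, List.getD_eq_default _ _ le_rfl]
  · rw [List.getD_eq_default _ _ le_rfl]

theorem entry_stable {s s' i a : ℕ} (h : Q.entry t s i = some a) (hss : s ≤ s') :
    Q.entry t s' i = some a := by
  induction s', hss using Nat.le_induction with
  | base => exact h
  | succ s' _ ih =>
    rw [entry_succ, if_neg fun hp => by simp [entry_place hp] at ih, ih]

variable (Q t) in
theorem entry_zero (s : ℕ) : Q.entry t s 0 = some t :=
  entry_stable (s := 0) rfl (Nat.zero_le s)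

theorem mem_stage_iff {s : ℕ} {x : Option ℕ} :
    x ∈ Q.stage t s ↔ ∃ i ≤ s, Q.entry t s i = x := by
  simp only [List.mem_iff_getElem, entry, length_stage]
  constructor
  · rintro ⟨i, hi, rfl⟩
    exact ⟨i, by omega, List.getD_eq_getElem _ _ _⟩
  · rintro ⟨i, hi, rfl⟩
    exact ⟨i, by omega, (List.getD_eq_getElem _ _ _).symm⟩

theorem mem_stage_of_entry {s i : ℕ} {x : Option ℕ} (h : Q.entry t s i = x) (hx : x.isSome) :
    x ∈ Q.stage t s := by
  obtain ⟨a, rfl⟩ := Option.isSome_iff_exists.1 hx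
  exact mem_stage_iff.2 ⟨i, le_of_entry_eq_some h, h⟩

theorem mem_stage_mono {s s' a : ℕ} (h : some a ∈ Q.stage t s) (hss : s ≤ s') :
    some a ∈ Q.stage t s' := by
  obtain ⟨i, -, hi⟩ := mem_stage_iff.1 h
  exact mem_stage_of_entry (entry_stable hi hss) rfl

theorem next_mem_stage_succ {s : ℕ} (h : (Q.place t s).isSome) :
    some (Q.next t s) ∈ Q.stage t (s + 1) := by
  obtain ⟨p, hp⟩ := Option.isSome_iff_exists.1 h
  exact mem_stage_of_entry (by rw [entry_succ, if_pos hp]) rfl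

theorem mem_stage_succ {s a : ℕ} (h : some a ∈ Q.stage t (s + 1)) :
    some a ∈ Q.stage t s ∨ (Q.place t s).isSome ∧ a = Q.next t s := by
  obtain ⟨i, -, hi⟩ := mem_stage_iff.1 h
  rw [entry_succ] at hi
  split_ifs at hi with hp
  · exact Or.inr ⟨by simp [hp], (Option.some.inj hi).symm⟩
  · exact Or.inl (mem_stage_of_entry hi rfl)

theorem next_ne_entry (s i : ℕ) : Q.entry t s i ≠ some (Q.next t s) := fun h =>
  firstFree_not_mem _ (mem_stage_of_entry h rfl)

theorem entry_injective {s i j a : ℕ} (hi : Q.entry t s i = some a)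
    (hj : Q.entry t s j = some a) : i = j := by
  induction s generalizing i j with
  | zero => rw [Nat.le_zero.1 (le_of_entry_eq_some hi), Nat.le_zero.1 (le_of_entry_eq_some hj)]
  | succ s ih =>
    rw [entry_succ] at hi hj
    split_ifs at hi hj with hpi hpj hpj
    · exact Option.some.inj (hpi.symm.trans hpj)
    · exact absurd (hj.trans hi.symm) (next_ne_entry s j)
    · exact absurd (hi.trans hj.symm) (next_ne_entry s i)
    · exact ih hi hj

theorem eq_of_place_eq_some {s s' p : ℕ} (h : Q.place t s = some p)
    (h' : Q.place t s' = some p) : s = s' := by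
  have key : ∀ {s s'}, s < s' → Q.place t s = some p → Q.place t s' ≠ some p :=
    fun hss hp hp' => by
      have := entry_stable (by rw [entry_succ, if_pos hp]) hss
      simp [entry_place hp'] at this
  rcases lt_trichotomy s s' with hss | rfl | hss
  exacts [absurd h' (key hss h), rfl, absurd h (key hss h')]

theorem settled_iff {s : ℕ} {L : List (Option ℕ)} {n : ℕ} : Q.Settled s L n ↔
    ∀ a, some a ∈ L → (Q.approx s a n).isSome ∧ (Q.approx s n a).isSome :=
  ⟨fun h a ha => h _ ha a rfl, fun h x hx a (hxa : x = some a) => by subst hxa; exact h a hx⟩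

theorem settled_of_place {s p : ℕ} (h : Q.place t s = some p) :
    Q.Settled s (Q.stage t s) (Q.next t s) := by
  unfold place target at h
  split_ifs at h with hs <;> exact hs

theorem place_isSome_of_settled {s : ℕ} (h : Q.Settled s (Q.stage t s) (Q.next t s)) :
    (Q.place t s).isSome := by
  unfold place target
  rw [if_pos (show Q.Settled s (Q.stage t s) (firstFree (Q.stage t s)) from h)]
  rfl

theorem isSome_approx {s i j a b : ℕ} (hi : Q.entry t s i = some a)
    (hj : Q.entry t s j = some b) (hij : i ≠ j) : (Q.approx s a b).isSome := by
  induction s generalizing i j a b with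
  | zero =>
    exact absurd ((Nat.le_zero.1 (le_of_entry_eq_some hi)).trans
      (Nat.le_zero.1 (le_of_entry_eq_some hj)).symm) hij
  | succ s ih =>
    rw [entry_succ] at hi hj
    split_ifs at hi hj with hpi hpj hpj
    · exact absurd (Option.some.inj (hpi.symm.trans hpj)) hij
    · cases hi
      exact Q.isSome_mono s.le_succ (settled_iff.1 (settled_of_place hpi) b
        (mem_stage_of_entry hj rfl)).2
    · cases hj
      exact Q.isSome_mono s.le_succ (settled_iff.1 (settled_of_place hpj) a
        (mem_stage_of_entry hi rfl)).1
    · exact Q.isSome_mono s.le_succ (ih hi hj hij)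

/-! ### The approximations are correct on the stages -/

theorem leAt_eq {s a b : ℕ} (h : (Q.approx s a b).isSome) : Q.leAt s a b = T.le a b := by
  obtain ⟨v, hv⟩ := Option.isSome_iff_exists.1 h
  rw [leAt, hv, Q.le_of_approx_eq_some hv]
  cases v <;> rfl

theorem leAt_or_eq_eq {s a : ℕ} (ha : some a ∈ Q.stage t s) :
    (Q.leAt s a t || decide (a = t)) = (T.le a t || decide (a = t)) := by
  by_cases hat : a = t
  · simp [hat]
  obtain ⟨i, -, hi⟩ := mem_stage_iff.1 ha
  have hi0 : i ≠ 0 := by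
    rintro rfl
    exact hat (Option.some.inj ((entry_zero Q t s).symm.trans hi)).symm
  rw [leAt_eq (isSome_approx hi (entry_zero Q t s) hi0)]

theorem pendingLE_leAt_entry {s i j : ℕ} (hij : i ≠ j) :
    pendingLE (Q.leAt s) t (Q.entry t s i) (Q.entry t s j) =
      pendingLE T.le t (Q.entry t s i) (Q.entry t s j) := by
  rcases hi : Q.entry t s i with _ | a
  · rfl
  rcases hj : Q.entry t s j with _ | b
  · exact leAt_or_eq_eq (mem_stage_of_entry hi rfl)
  · exact leAt_eq (isSome_approx hi hj hij)

theorem fitsAsLeaf_leAt_iff {s n : ℕ} (h : Q.Settled s (Q.stage t s) n) :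
    FitsAsLeaf (Q.leAt s) t (Q.stage t s) n ↔ FitsAsLeaf T.le t (Q.stage t s) n := by
  refine forall₂_congr fun x hx => forall₂_congr fun a (hxa : x = some a) => ?_
  subst hxa
  rw [leAt_eq (h _ hx a rfl).1, leAt_eq (h _ hx a rfl).2, leAt_or_eq_eq hx]

theorem fitsAsLeaf_of_place {s p : ℕ} (h : Q.place t s = some p) (hp : p ≤ s) :
    FitsAsLeaf T.le t (Q.stage t s) (Q.next t s) := by
  rw [← fitsAsLeaf_leAt_iff (settled_of_place h)]
  unfold place target at h
  split_ifs at h with hs hf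
  · exact hf
  · cases h
    rw [length_stage] at hp
    omega

theorem place_of_fitsAsLeaf {s : ℕ} (hs : Q.Settled s (Q.stage t s) (Q.next t s))
    (hf : FitsAsLeaf T.le t (Q.stage t s) (Q.next t s)) :
    Q.place t s = some ((Q.stage t s).idxOf none) := by
  rw [← fitsAsLeaf_leAt_iff hs] at hf
  unfold place target
  unfold next at hs hf
  rw [if_pos hs, if_pos hf]

/-! ### Every element and every position is eventually used -/

variable (Q) in
theorem eventually_settled (L : List (Option ℕ)) (n : ℕ) :
    ∀ᶠ s in Filter.atTop, Q.Settled s L n := by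
  have hpair : ∀ a b, ∀ᶠ s in Filter.atTop, (Q.approx s a b).isSome := fun a b =>
    let ⟨S, hS⟩ := Q.exists_isSome a b
    Filter.eventually_atTop.2 ⟨S, fun _ hs => Q.isSome_mono hs hS⟩
  simp only [settled_iff]
  exact (Filter.eventually_all_finite (L.finite_toSet.preimage (Option.some_injective ℕ).injOn)).2
    fun a _ => (hpair a n).and (hpair n a)

theorem next_eq_of_forall_lt {s n : ℕ} (hlt : ∀ m < n, some m ∈ Q.stage t s)
    (hn : some n ∉ Q.stage t s) : Q.next t s = n := by
  rcases lt_trichotomy (Q.next t s) n with h | h | h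
  · exact absurd (hlt _ h) (firstFree_not_mem _)
  · exact h
  · exact absurd (mem_of_lt_firstFree h) hn

theorem exists_mem_stage_of_forall_lt {s₀ n : ℕ} (h : ∀ m < n, some m ∈ Q.stage t s₀) :
    ∃ s, some n ∈ Q.stage t s := by
  by_contra! hn
  have hnext : ∀ s ≥ s₀, Q.next t s = n := fun s hs =>
    next_eq_of_forall_lt (fun m hm => mem_stage_mono (h m hm) hs) (hn s)
  have hplace : ∀ s ≥ s₀, Q.place t s = none := fun s hs =>
    Option.not_isSome_iff_eq_none.1 fun hp => hn (s + 1) (hnext s hs ▸ next_mem_stage_succ hp)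
  have hmem : ∀ s ≥ s₀, ∀ a, some a ∈ Q.stage t s ↔ some a ∈ Q.stage t s₀ := by
    intro s hs a
    induction s, hs using Nat.le_induction with
    | base => rfl
    | succ s hs ih => simp [stage_succ_of_place_eq_none (hplace s hs), ih]
  obtain ⟨s, hsettled, hs₀⟩ :=
    ((Q.eventually_settled (Q.stage t s₀) n).and (Filter.eventually_ge_atTop s₀)).exists
  have : Q.Settled s (Q.stage t s) (Q.next t s) := by
    rw [hnext s hs₀, settled_iff]
    exact fun a ha => settled_iff.1 hsettled a ((hmem s hs₀ a).1 ha)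
  simpa [hplace s hs₀] using place_isSome_of_settled this

variable (Q t) in
theorem exists_mem_stage (n : ℕ) : ∃ s, some n ∈ Q.stage t s := by
  have hlt : ∀ n, ∃ s, ∀ m < n, some m ∈ Q.stage t s := by
    intro n
    induction n with
    | zero => exact ⟨0, by simp⟩
    | succ n ih =>
      obtain ⟨s₀, hs₀⟩ := ih
      obtain ⟨s, hs⟩ := exists_mem_stage_of_forall_lt hs₀
      refine ⟨max s₀ s, fun m hm => ?_⟩
      rcases Nat.lt_succ_iff_lt_or_eq.1 hm with hm | rfl
      · exact mem_stage_mono (hs₀ m hm) (le_max_left _ _)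
      · exact mem_stage_mono hs (le_max_right _ _)
  exact exists_mem_stage_of_forall_lt (hlt n).choose_spec

theorem exists_fitsAsLeaf_of_child {x : ℕ} (hx : T.Child t x) :
    ∃ s, T.le x (Q.next t s) ∧ Q.Settled s (Q.stage t s) (Q.next t s) ∧
      FitsAsLeaf T.le t (Q.stage t s) (Q.next t s) := by
  classical
  have hex : ∃ s, ∃ a, some a ∈ Q.stage t (s + 1) ∧ T.le x a := by
    obtain ⟨s, hs⟩ := Q.exists_mem_stage t x
    exact ⟨s, x, mem_stage_mono hs s.le_succ, T.refl x⟩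
  obtain ⟨a, ha, hxa⟩ := Nat.find_spec hex
  have hcone : ∀ b, some b ∈ Q.stage t (Nat.find hex) → T.le x b = false := by
    intro b hb
    rw [← Bool.not_eq_true]
    intro hxb
    rcases hs : Nat.find hex with _ | k
    · rw [hs] at hb
      obtain rfl : b = t := by simpa [stage] using hb
      exact hx.2.1 (T.antisymm _ _ hx.1 hxb)
    · exact Nat.find_min hex (hs ▸ k.lt_succ_self) ⟨b, hs ▸ hb, hxb⟩
  rcases mem_stage_succ ha with ha | ⟨hp, rfl⟩
  · simp [hcone a ha] at hxa
  · obtain ⟨p, hp⟩ := Option.isSome_iff_exists.1 hp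
    exact ⟨_, hxa, settled_of_place hp, hx.fitsAsLeaf hxa hcone⟩

theorem idxOf_none_le {s i : ℕ} (hi : i ≤ s) (h : Q.entry t s i = none) :
    (Q.stage t s).idxOf none ≤ i := by
  unfold entry at h
  rw [List.getD_eq_getElem _ _ (by rw [length_stage]; omega)] at h
  by_contra! hlt
  have := List.not_of_lt_findIdx hlt
  simp [h] at this

theorem exists_entry_eq_some (hinf : {x | T.Child t x}.Infinite) (i : ℕ) :
    ∃ s a, Q.entry t s i = some a := by
  by_contra! hpend
  replace hpend : ∀ s, Q.entry t s i = none := fun s =>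
    Option.eq_none_iff_forall_ne_some.2 (hpend s)
  -- While `i` is pending, the stages `≥ i` placing an element as a leaf fill distinct
  -- positions `≤ i`; but every child of `t` yields such a stage, and distinct children
  -- yield distinct stages.
  have hfin : {s | i ≤ s ∧ Q.Settled s (Q.stage t s) (Q.next t s) ∧
      FitsAsLeaf T.le t (Q.stage t s) (Q.next t s)}.Finite := by
    refine Set.Finite.of_injOn (f := fun s => (Q.stage t s).idxOf none) (t := Set.Iic i)
      (fun s hs => idxOf_none_le hs.1 (hpend s)) (fun s hs s' hs' heq => ?_) (Set.finite_Iic i)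
    refine eq_of_place_eq_some (place_of_fitsAsLeaf hs.2.1 hs.2.2) ?_
    rw [place_of_fitsAsLeaf hs'.2.1 hs'.2.2]
    exact congrArg some heq.symm
  apply hinf
  refine ((hfin.union (Set.finite_Iio i)).biUnion fun s _ =>
    Set.Subsingleton.finite (s := {x | T.Child t x ∧ T.le x (Q.next t s)})
      fun x hx y hy => hx.1.eq_of_le hy.1 hx.2 hy.2).subset fun x hx => ?_
  obtain ⟨s, hxs, hsettled, hfits⟩ := exists_fitsAsLeaf_of_child hx
  simp only [Set.mem_iUnion]
  exact ⟨s, (lt_or_ge s i).elim Or.inr fun h => Or.inl ⟨h, hsettled, hfits⟩, hx, hxs⟩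

/-! ### The limit map is an isomorphism -/

theorem exists_place_eq_of_entry {s s' j n : ℕ} (hs : Q.entry t s j = none)
    (hs' : Q.entry t s' j = some n) :
    ∃ m, s ≤ m ∧ Q.place t m = some j ∧ Q.next t m = n := by
  have hss : s ≤ s' := Nat.le_of_not_lt fun hlt => by simp [entry_stable hs' hlt.le] at hs
  induction s', hss using Nat.le_induction generalizing n with
  | base => simp [hs] at hs'
  | succ s' hss ih =>
    rw [entry_succ] at hs'
    split_ifs at hs' with hp
    · exact ⟨s', hss, hp, Option.some.inj hs'⟩
    · exact ih hs'

variable {ρ : ℕ → ℕ}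

theorem eq_of_entry_eq_some (hρ : ∀ i, ∃ s, Q.entry t s i = some (ρ i)) {s i a : ℕ}
    (h : Q.entry t s i = some a) : a = ρ i := by
  obtain ⟨s', hs'⟩ := hρ i
  exact Option.some.inj ((entry_stable h (le_max_left s s')).symm.trans
    (entry_stable hs' (le_max_right s s')))

theorem exists_fill (hρ : ∀ i, ∃ s, Q.entry t s i = some (ρ i)) {s j : ℕ}
    (hj : Q.entry t s j = none) (hjs : j ≤ s) :
    ∃ m, s ≤ m ∧ Q.place t m = some j ∧ FitsAsLeaf T.le t (Q.stage t m) (ρ j) ∧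
      some (ρ j) ∈ Q.stage t (m + 1) := by
  obtain ⟨s', hs'⟩ := hρ j
  obtain ⟨m, hsm, hp, hnext⟩ := exists_place_eq_of_entry hj hs'
  rw [← hnext]
  exact ⟨m, hsm, hp, fitsAsLeaf_of_place hp (hjs.trans hsm), next_mem_stage_succ (by simp [hp])⟩

theorem pendingLE_entry_eq (hρ : ∀ i, ∃ s, Q.entry t s i = some (ρ i)) {s i j : ℕ}
    (hij : i ≠ j) (hi : i ≤ s) (hj : j ≤ s) :
    pendingLE T.le t (Q.entry t s i) (Q.entry t s j) = T.le (ρ i) (ρ j) := by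
  rcases hei : Q.entry t s i with _ | a <;> rcases hej : Q.entry t s j with _ | b
  · obtain ⟨m, -, hpm, hfm, hmem⟩ := exists_fill hρ hei hi
    obtain ⟨m', -, hpm', hfm', hmem'⟩ := exists_fill hρ hej hj
    rcases lt_trichotomy m m' with hlt | rfl | hlt
    · exact (hfm.incomparable (mem_stage_of_entry (entry_zero Q t m) rfl) hfm'
        (mem_stage_mono hmem hlt)).1.symm
    · exact absurd (Option.some.inj (hpm.symm.trans hpm')) hij
    · exact (hfm'.incomparable (mem_stage_of_entry (entry_zero Q t m') rfl) hfm
        (mem_stage_mono hmem' hlt)).2.symm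
  · obtain ⟨m, hsm, -, hfm, -⟩ := exists_fill hρ hei hi
    rw [← eq_of_entry_eq_some hρ hej]
    exact (hfm.le_eq (mem_stage_mono (mem_stage_of_entry hej rfl) hsm)).2.symm
  · obtain ⟨m, hsm, -, hfm, -⟩ := exists_fill hρ hej hj
    rw [← eq_of_entry_eq_some hρ hei]
    exact (hfm.le_eq (mem_stage_mono (mem_stage_of_entry hei rfl) hsm)).1.symm
  · rw [← eq_of_entry_eq_some hρ hei, ← eq_of_entry_eq_some hρ hej]
    rfl

variable (Q t) in
theorem exists_bijective_le_eq (hinf : {x | T.Child t x}.Infinite) :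
    ∃ ρ : ℕ → ℕ, Function.Bijective ρ ∧ ∀ i j, Q.le t i j = T.le (ρ i) (ρ j) := by
  choose σ ρ hσ using exists_entry_eq_some (Q := Q) hinf
  have hρ : ∀ i, ∃ s, Q.entry t s i = some (ρ i) := fun i => ⟨σ i, hσ i⟩
  refine ⟨ρ, ⟨fun i j hij => ?_, fun n => ?_⟩, fun i j => ?_⟩
  · exact entry_injective (entry_stable (hσ i) (le_max_left (σ i) (σ j)))
      (hij ▸ entry_stable (hσ j) (le_max_right (σ i) (σ j)))
  · obtain ⟨i, -, hi⟩ := mem_stage_iff.1 (Q.exists_mem_stage t n).choose_spec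
    exact ⟨i, (eq_of_entry_eq_some hρ hi).symm⟩
  · by_cases hij : i = j
    · simp [hij, le, T.refl]
    · rw [le, pendingLE_leAt_entry hij, pendingLE_entry_eq hρ hij (le_max_left i j)
        (le_max_right i j)]
      simp [hij]

end TOrd.Approx

/-- every computable tree with a node having infinitely many children has a
punctual presentation. -/
theorem punctual_presentation_of_computableTree (T : TOrd) (hcomp : T.Comp)
    (hnode : ∃ t : ℕ, {c | T.Child t c}.Infinite) :
    ∃ A : TOrd, A.Punctual ∧ ∃ h, T.Iso A h := by
  obtain ⟨Q⟩ := hcomp.nonempty_approx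
  obtain ⟨t, hinf⟩ := hnode
  obtain ⟨ρ, hρ, hle⟩ := Q.exists_bijective_le_eq t hinf
  exact ⟨T.comap ρ hρ.1, (Q.primrec_le t).of_eq hle, _, T.iso_comap hρ⟩

end PRCat
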